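/- arXiv:1903.06991 — 3 statements merged into one kernel-verified Lean document; each statement's English description precedes it below -/
import Mathlib

section
/- Let P be a probability distribution, Q another probability distribution absolutely continuous with respect to P, and α ∈ (0,1). Suppose S ≥ 0 with E_P[S] = 1 and Q(S ≥ 1/α) > 0. Define S'(y) = 1/α if S(y) ≥ 1/α and 0 otherwise. Then E_P[S'] ≤ 1 and Q(S' ≥ 1/α) = Q(S ≥ 1/α). Consequently the normalized all-or-nothing bet S'/E_P[S'] has expected value 1 under P and Q(S'/E_P[S'] ≥ 1/α) ≥ Q(S ≥ 1/α). -/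
/-!
Truncating `S` to the all-or-nothing bet `t · 1{S ≥ t}` only lowers the payoff (since `S ≥ 0`), so
its `P`-price is at most `E_P[S] = 1`, while the event `{S' ≥ t}` is exactly `{S ≥ t}`. The price
`t · P(S ≥ t)` is positive because `Q ≪ P` and `Q(S ≥ t) > 0`, so dividing by it is legitimate,
and since it is at most `1` the division can only enlarge the event of reaching `t`.
-/

open MeasureTheory

namespace AllOrNothing

variable {Ω : Type*}

noncomputable def bet (t : ℝ) (S : Ω → ℝ) (ω : Ω) : ℝ := if t ≤ S ω then t else 0

theorem bet_eq_indicator (t : ℝ) (S : Ω → ℝ) :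
    bet t S = {ω | t ≤ S ω}.indicator (fun _ => t) := by
  ext ω
  by_cases h : t ≤ S ω <;> simp [bet, h]

theorem bet_le_self {t : ℝ} {S : Ω → ℝ} (hS : ∀ ω, 0 ≤ S ω) (ω : Ω) : bet t S ω ≤ S ω := by
  unfold bet
  split_ifs with h
  exacts [h, hS ω]

theorem setOf_le_bet {t : ℝ} (ht : 0 < t) (S : Ω → ℝ) :
    {ω | t ≤ bet t S ω} = {ω | t ≤ S ω} := by
  ext ω
  by_cases h : t ≤ S ω <;> simp [bet, h, ht.not_ge]

theorem setOf_le_bet_div_superset {t c : ℝ} (ht : 0 < t) (hc₀ : 0 < c) (hc₁ : c ≤ 1)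
    (S : Ω → ℝ) : {ω | t ≤ S ω} ⊆ {ω | t ≤ bet t S ω / c} := by
  intro ω (hω : t ≤ S ω)
  simp only [Set.mem_ofPred_eq, bet, if_pos hω]
  rw [le_div_iff₀ hc₀]
  exact mul_le_of_le_one_right ht.le hc₁

variable [MeasurableSpace Ω]

theorem integral_bet (P : Measure Ω) (t : ℝ) {S : Ω → ℝ} (hS : Measurable S) :
    ∫ ω, bet t S ω ∂P = t * P.real {ω | t ≤ S ω} := by
  rw [bet_eq_indicator, integral_indicator_const _ (measurableSet_le measurable_const hS),
    smul_eq_mul, mul_comm]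

theorem integrable_bet (P : Measure Ω) [IsFiniteMeasure P] (t : ℝ) {S : Ω → ℝ}
    (hS : Measurable S) : Integrable (bet t S) P := by
  rw [bet_eq_indicator]
  exact (integrable_const t).indicator (measurableSet_le measurable_const hS)

theorem integral_bet_le_integral (P : Measure Ω) [IsFiniteMeasure P] (t : ℝ) {S : Ω → ℝ}
    (hSmeas : Measurable S) (hSnn : ∀ ω, 0 ≤ S ω) (hSint : Integrable S P) :
    ∫ ω, bet t S ω ∂P ≤ ∫ ω, S ω ∂P :=
  integral_mono (integrable_bet P t hSmeas) hSint (bet_le_self hSnn)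

theorem integral_bet_pos {P Q : Measure Ω} [IsFiniteMeasure P] (hac : Q ≪ P) {t : ℝ}
    (ht : 0 < t) {S : Ω → ℝ} (hS : Measurable S) (hQ : 0 < Q {ω | t ≤ S ω}) :
    0 < ∫ ω, bet t S ω ∂P := by
  have hP : P {ω | t ≤ S ω} ≠ 0 := fun h => hQ.ne' (hac h)
  rw [integral_bet P t hS]
  exact mul_pos ht (ENNReal.toReal_pos hP (measure_ne_top P _))

end AllOrNothing

open AllOrNothing in
theorem stmt_8_general {Ω : Type*} [MeasurableSpace Ω] (P Q : Measure Ω)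
    [IsProbabilityMeasure P] (hac : Q ≪ P)
    (α : ℝ) (hα : α ∈ Set.Ioo (0 : ℝ) 1)
    (S : Ω → ℝ) (hSmeas : Measurable S) (hSnn : ∀ ω, 0 ≤ S ω)
    (hSint : Integrable S P) (hSexp : ∫ ω, S ω ∂P = 1)
    (hQpos : 0 < Q {ω | 1 / α ≤ S ω}) :
    (∫ ω, (if 1 / α ≤ S ω then 1 / α else 0 : ℝ) ∂P ≤ 1) ∧
    (Q {ω | 1 / α ≤ (if 1 / α ≤ S ω then 1 / α else 0 : ℝ)} = Q {ω | 1 / α ≤ S ω}) ∧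
    (∫ ω, (if 1 / α ≤ S ω then 1 / α else 0 : ℝ) /
        (∫ ω', (if 1 / α ≤ S ω' then 1 / α else 0 : ℝ) ∂P) ∂P = 1) ∧
    Q {ω | 1 / α ≤ S ω} ≤
      Q {ω | 1 / α ≤ (if 1 / α ≤ S ω then 1 / α else 0 : ℝ) /
        (∫ ω', (if 1 / α ≤ S ω' then 1 / α else 0 : ℝ) ∂P)} := by
  change (∫ ω, bet (1 / α) S ω ∂P ≤ 1) ∧
    (Q {ω | 1 / α ≤ bet (1 / α) S ω} = Q {ω | 1 / α ≤ S ω}) ∧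
    (∫ ω, bet (1 / α) S ω / (∫ ω', bet (1 / α) S ω' ∂P) ∂P = 1) ∧
    Q {ω | 1 / α ≤ S ω} ≤ Q {ω | 1 / α ≤ bet (1 / α) S ω / (∫ ω', bet (1 / α) S ω' ∂P)}
  have ht : 0 < 1 / α := one_div_pos.mpr hα.1
  have hprice_le : ∫ ω, bet (1 / α) S ω ∂P ≤ 1 :=
    hSexp ▸ integral_bet_le_integral P _ hSmeas hSnn hSint
  have hprice_pos := integral_bet_pos hac ht hSmeas hQpos
  refine ⟨hprice_le, by rw [setOf_le_bet ht], ?_,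
    measure_mono (setOf_le_bet_div_superset ht hprice_pos hprice_le S)⟩
  rw [integral_div, div_self hprice_pos.ne']

/-- Neyman–Pearson in betting form: replacing a bet `S` by the all-or-nothing
bet `S'` (pay `1/α` iff `S ≥ 1/α`) costs at most the same and, after
normalization, has at least as large a probability under `Q` of multiplying
the capital by `1/α`. -/
theorem stmt_8 {Ω : Type*} [MeasurableSpace Ω] (P Q : Measure Ω)
    [IsProbabilityMeasure P] [IsProbabilityMeasure Q] (hac : Q ≪ P)
    (α : ℝ) (hα : α ∈ Set.Ioo (0 : ℝ) 1)
    (S : Ω → ℝ) (hSmeas : Measurable S) (hSnn : ∀ ω, 0 ≤ S ω)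
    (hSint : Integrable S P) (hSexp : ∫ ω, S ω ∂P = 1)
    (hQpos : 0 < Q {ω | 1 / α ≤ S ω}) :
    (∫ ω, (if 1 / α ≤ S ω then 1 / α else 0 : ℝ) ∂P ≤ 1) ∧
    (Q {ω | 1 / α ≤ (if 1 / α ≤ S ω then 1 / α else 0 : ℝ)} = Q {ω | 1 / α ≤ S ω}) ∧
    (∫ ω, (if 1 / α ≤ S ω then 1 / α else 0 : ℝ) /
        (∫ ω', (if 1 / α ≤ S ω' then 1 / α else 0 : ℝ) ∂P) ∂P = 1) ∧
    Q {ω | 1 / α ≤ S ω} ≤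
      Q {ω | 1 / α ≤ (if 1 / α ≤ S ω then 1 / α else 0 : ℝ) /
        (∫ ω', (if 1 / α ≤ S ω' then 1 / α else 0 : ℝ) ∂P)} :=
  stmt_8_general P Q hac α hα S hSmeas hSnn hSint hSexp hQpos
end

section
/- Let p be a random variable on a probability space (Ω, P) taking values in (0,1] that is stochastically dominated under P by the uniform distribution on (0,1), i.e., P(p ≤ t) ≤ t for all t ∈ (0,1). Then E_P[1/√p − 1] ≤ 1. -/
open MeasureTheory Set

/-- If `p` takes values in `(0,1]` and is stochastically dominated under `P`
by the uniform distribution on `(0,1)`, then `E_P[1/√p − 1] ≤ 1`. -/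
theorem stmt_10 {Ω : Type*} [MeasurableSpace Ω] (P : Measure Ω)
    [IsProbabilityMeasure P] (p : Ω → ℝ) (hmeas : Measurable p)
    (hrange : ∀ ω, p ω ∈ Set.Ioc (0 : ℝ) 1)
    (hdom : ∀ t ∈ Set.Ioo (0 : ℝ) 1, P {ω | p ω ≤ t} ≤ ENNReal.ofReal t) :
    ∫⁻ ω, ENNReal.ofReal (1 / Real.sqrt (p ω) - 1) ∂P ≤ 1 := by
  set f : Ω → ℝ := fun ω => 1 / Real.sqrt (p ω) - 1 with hf
  have hf_nn : 0 ≤ᵐ[P] f := by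
    refine Filter.Eventually.of_forall fun ω => ?_
    have h1 := (hrange ω).1
    have h2 := (hrange ω).2
    have hs : Real.sqrt (p ω) ≤ 1 := by
      rw [show (1:ℝ) = Real.sqrt 1 from (Real.sqrt_one).symm]
      exact Real.sqrt_le_sqrt h2
    have hs0 : 0 < Real.sqrt (p ω) := Real.sqrt_pos.2 h1
    have : (1:ℝ) ≤ 1 / Real.sqrt (p ω) := (one_le_div hs0).2 hs
    simp only [Pi.zero_apply, hf]
    linarith
  have hf_mble : AEMeasurable f P := by
    apply Measurable.aemeasurable
    exact ((hmeas.sqrt).const_div 1).sub measurable_const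
  rw [lintegral_eq_lintegral_meas_le P hf_nn hf_mble]
  have key : ∀ t ∈ Ioi (0:ℝ), P {a | t ≤ f a} ≤ ENNReal.ofReal ((1+t) ^ (-2 : ℝ)) := by
    intro t ht
    simp only [mem_Ioi] at ht
    have h1t : (0:ℝ) < 1 + t := by linarith
    have hmem : (1+t) ^ (-2 : ℝ) ∈ Ioo (0:ℝ) 1 := by
      constructor
      · exact Real.rpow_pos_of_pos h1t _
      · rw [Real.rpow_neg h1t.le]
        rw [inv_lt_one_iff₀]
        right
        have h11 : (1:ℝ) < 1 + t := by linarith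
        calc (1:ℝ) = 1 ^ (2:ℝ) := by norm_num
          _ < (1+t) ^ (2:ℝ) := by
            apply Real.rpow_lt_rpow (by norm_num) h11 (by norm_num)
    have hsub : {a | t ≤ f a} ⊆ {ω | p ω ≤ (1+t) ^ (-2 : ℝ)} := by
      intro ω hω
      simp only [Set.mem_setOf_eq, hf] at hω ⊢
      have h1 := (hrange ω).1
      have hs0 : 0 < Real.sqrt (p ω) := Real.sqrt_pos.2 h1
      have hle : 1 + t ≤ 1 / Real.sqrt (p ω) := by linarith
      have h2 : (1 + t) * Real.sqrt (p ω) ≤ 1 := (le_div_iff₀ hs0).1 hle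
      have hsq : Real.sqrt (p ω) ≤ (1+t)⁻¹ := by
        rw [← one_div]
        rw [le_div_iff₀ h1t]
        linarith [h2]
      have hps : p ω = Real.sqrt (p ω) ^ 2 := (Real.sq_sqrt h1.le).symm
      rw [hps, Real.rpow_neg h1t.le, show (2:ℝ) = ((2:ℕ):ℝ) by norm_num,
        Real.rpow_natCast, ← inv_pow]
      exact pow_le_pow_left₀ hs0.le hsq 2
    exact le_trans (measure_mono hsub) (hdom _ hmem)
  have hb : Measurable fun x : ℝ => ENNReal.ofReal (x ^ (-2 : ℝ)) := by fun_prop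
  calc ∫⁻ t in Ioi (0:ℝ), P {a | t ≤ f a}
      ≤ ∫⁻ t in Ioi (0:ℝ), ENNReal.ofReal ((1+t) ^ (-2 : ℝ)) := by
        apply setLIntegral_mono (by fun_prop) key
    _ = ∫⁻ x in Ioi (1:ℝ), ENNReal.ofReal (x ^ (-2 : ℝ)) := by
        have mp : MeasurePreserving (fun x : ℝ => 1 + x) volume volume :=
          measurePreserving_add_left volume 1
        have heq := mp.setLIntegral_comp_preimage
          (measurableSet_Ioi (a := (1:ℝ))) hb
        rw [← heq]
        have hpre : (fun x : ℝ => 1 + x) ⁻¹' Ioi 1 = Ioi 0 := by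
          ext x
          simp [lt_add_iff_pos_right]
        rw [hpre]
    _ = ENNReal.ofReal (∫ x in Ioi (1:ℝ), x ^ (-2 : ℝ)) := by
        rw [← ofReal_integral_eq_lintegral_ofReal]
        · exact integrableOn_Ioi_rpow_of_lt (by norm_num) one_pos
        · filter_upwards [ae_restrict_mem measurableSet_Ioi] with x hx
          exact Real.rpow_nonneg (by linarith [mem_Ioi.1 hx]) _
    _ ≤ 1 := by
        rw [integral_Ioi_rpow_of_lt (by norm_num) one_pos]
        norm_num
end

section
/- (Hoeffding-type betting guarantee) In the protocol where on each round Skeptic with capital K_{n−1} chooses M_n ∈ [−K_{n−1}, K_{n−1}], Reality chooses e_n ∈ [−1,1], and K_n = K_{n−1} + M_n e_n, Skeptic has a strategy guaranteeing K_n ≥ 0 for all n; moreover, for any ε > 0 and the strategy M_n := εK_{n−1}, the capital satisfies K_n ≥ exp(ε·Σ_{i≤n} e_i − ε²n) provided |ε| ≤ 1/2 (using ln(1+x) ≥ x − x² for |x| ≤ 1/2). Hence if the running sum Σ_{i≤n} e_i is large relative to √n, the capital is large. -/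
lemma key_log_ineq (y : ℝ) (hy : |y| ≤ 1/2) : y - y^2 ≤ Real.log (1 + y) := by
  have h1 : |(-y)| < 1 := by rw [abs_neg]; linarith [abs_nonneg y]
  have h := Real.abs_log_sub_add_sum_range_le h1 4
  rw [abs_le] at h
  have h2 := h.1
  simp [Finset.sum_range_succ] at h2 ⊢
  have hu : |y| ≤ 1/2 := hy
  have hau : 0 ≤ |y| := abs_nonneg y
  have h1u : (1:ℝ)/2 ≤ 1 - |y| := by linarith
  have hlog : Real.log (1 + y) ≥ y - y^2/2 + y^3/3 - y^4/4 - |y|^5 / (1 - |y|) := by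
    nlinarith
  have hpoly : |y|^5 / (1 - |y|) ≤ y^2/2 + y^3/3 - y^4/4 := by
    rw [div_le_iff₀ (by linarith)]
    rcases abs_cases y with ⟨hy1, hy2⟩ | ⟨hy1, hy2⟩ <;> rw [hy1]
    · have ht : (0:ℝ) ≤ 1/2 - y := by rw [hy1] at hu; linarith
      nlinarith [mul_nonneg (mul_nonneg hy2 hy2) ht,
        mul_nonneg (mul_nonneg (mul_nonneg hy2 hy2) hy2) ht,
        mul_nonneg (mul_nonneg (mul_nonneg (mul_nonneg hy2 hy2) hy2) hy2) ht,
        mul_nonneg (mul_nonneg (mul_nonneg (mul_nonneg hy2 hy2) hy2) hy2) hy2]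
    · have hu2 : (0:ℝ) ≤ -y := by linarith
      have ht : (0:ℝ) ≤ 1/2 - (-y) := by rw [hy1] at hu; linarith
      nlinarith [mul_nonneg (mul_nonneg hu2 hu2) ht,
        mul_nonneg (mul_nonneg (mul_nonneg hu2 hu2) hu2) ht,
        mul_nonneg (mul_nonneg (mul_nonneg (mul_nonneg hu2 hu2) hu2) hu2) ht,
        mul_nonneg (mul_nonneg (mul_nonneg (mul_nonneg hu2 hu2) hu2) hu2) hu2]
  linarith
/-- Hoeffding-type betting guarantee in the bounded-errors protocol: playing
`M_n = ε K_{n−1}` with `|ε| ≤ 1/2` keeps the capital nonnegative and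
guarantees `K_n ≥ exp (ε Σ_{i<n} e_i − ε² n)`. -/
theorem stmt_18 (e : ℕ → ℝ) (he : ∀ n, e n ∈ Set.Icc (-1 : ℝ) 1)
    (ε : ℝ) (hε : |ε| ≤ 1 / 2) (K : ℕ → ℝ) (hK0 : K 0 = 1)
    (hK : ∀ n, K (n + 1) = K n + (ε * K n) * e n) :
    (∀ n, 0 ≤ K n) ∧
    (∀ n, Real.exp (ε * ∑ i ∈ Finset.range n, e i - ε ^ 2 * n) ≤ K n) := by
  have habs : ∀ n, |ε * e n| ≤ 1/2 := by
    intro n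
    obtain ⟨h1, h2⟩ := he n
    rw [abs_mul]
    calc |ε| * |e n| ≤ (1/2) * 1 := by
          apply mul_le_mul hε (abs_le.2 ⟨h1, h2⟩) (abs_nonneg _) (by norm_num)
      _ = 1/2 := by ring
  have hstep : ∀ n, Real.exp (ε * e n - ε^2) ≤ 1 + ε * e n := by
    intro n
    have h := key_log_ineq (ε * e n) (habs n)
    have hpos : (0:ℝ) < 1 + ε * e n := by
      have := abs_le.1 (habs n); linarith [this.1]
    have h2 : ε * e n - ε^2 ≤ Real.log (1 + ε * e n) := by
      have he2 : (ε * e n)^2 ≤ ε^2 := by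
        obtain ⟨h1, h2⟩ := he n
        nlinarith [mul_nonneg (sq_nonneg ε) (by nlinarith : (0:ℝ) ≤ 1 - e n ^ 2)]
      linarith
    calc Real.exp (ε * e n - ε^2) ≤ Real.exp (Real.log (1 + ε * e n)) :=
          Real.exp_le_exp.2 h2
      _ = 1 + ε * e n := Real.exp_log hpos
  have main : ∀ n, Real.exp (ε * ∑ i ∈ Finset.range n, e i - ε ^ 2 * n) ≤ K n := by
    intro n
    induction n with
    | zero => simp [hK0]
    | succ n ih =>
      have hKpos : 0 < K n := lt_of_lt_of_le (Real.exp_pos _) ih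
      have hfac : (0:ℝ) < 1 + ε * e n := by
        have := abs_le.1 (habs n); linarith [this.1]
      rw [hK n, Finset.sum_range_succ]
      have : Real.exp (ε * (∑ i ∈ Finset.range n, e i + e n) - ε ^ 2 * (n+1))
          = Real.exp (ε * ∑ i ∈ Finset.range n, e i - ε ^ 2 * n) *
            Real.exp (ε * e n - ε^2) := by
        rw [← Real.exp_add]; ring_nf
      push_cast
      rw [this]
      calc Real.exp (ε * ∑ i ∈ Finset.range n, e i - ε ^ 2 * n) *
            Real.exp (ε * e n - ε^2)
          ≤ K n * (1 + ε * e n) := by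
            apply mul_le_mul ih (hstep n) (le_of_lt (Real.exp_pos _)) (le_of_lt hKpos)
        _ = K n + ε * K n * e n := by ring
  exact ⟨fun n => le_trans (le_of_lt (Real.exp_pos _)) (main n), main⟩
end
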